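/- Let n ∈ ℕ and set t_j = −n + 2j for j = 0, …, n. For every c = (c₀, …, c_n) ∈ ℂ^{n+1} there is a unique a = (a₀, …, a_n) ∈ ℂ^{n+1} with Σ_{q=0}^{n} a_q t_j^q = c_j for all j, and it satisfies |a_q| ≤ (n+1)·C(n,q)·max_{0≤j≤n} |c_j| for every q = 0, …, n, where C(n,q) is the binomial coefficient. (Equivalently, each entry of the inverse of the Vandermonde matrix with equispaced nodes t_j = −n+2j is bounded in absolute value by the corresponding binomial coefficient C(n,q).) -/

import Mathlib

noncomputable section
open MeasureTheory Complex Matrix Polynomial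
open scoped BigOperators ComplexConjugate

attribute [local instance] Matrix.frobeniusNormedAddCommGroup Matrix.frobeniusNormedSpace

/-- `ℂ²` with its Euclidean (Hermitian) norm. -/
abbrev C2 : Type := EuclideanSpace ℂ (Fin 2)

instance : MeasureSpace C2 :=
  { toMeasurableSpace := inferInstance
    volume := (volume : Measure (Fin 2 → ℂ)).map (MeasurableEquiv.toLp 2 (Fin 2 → ℂ)) }
instance : BorelSpace C2 := inferInstance

/-- `End(V_n)`, identified with `(n+1)×(n+1)` complex matrices. -/
abbrev MatN (n : ℕ) : Type := Matrix (Fin (n+1)) (Fin (n+1)) ℂ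

/-- The unitary group `U(2)`. -/
abbrev U2 : Type := Matrix.unitaryGroup (Fin 2) ℂ

/-- The natural action of a `2×2` matrix on `ℂ²`. -/
def act (m : Matrix (Fin 2) (Fin 2) ℂ) (z : C2) : C2 :=
  WithLp.toLp 2 (fun i => Matrix.mulVec m (fun a => z a) i)

/-- The matrix of the representation `τ_n` in the orthonormal basis
`e_j = C(n,j)^{1/2} z₁^j z₂^{n-j}` of `V_n`: the `(i,j)` entry is the coefficient of `e_i`
in `τ_n(k) e_j`, where `(τ_n(k)p)(z) = p(k⁻¹ z)`. -/
def tauM (n : ℕ) (k : Matrix (Fin 2) (Fin 2) ℂ) : MatN n :=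
  Matrix.of fun i j =>
    ((Real.sqrt (n.choose j) / Real.sqrt (n.choose i) : ℝ) : ℂ) *
      ∑ s ∈ Finset.range ((j : ℕ) + 1), ∑ t ∈ Finset.range (n - (j : ℕ) + 1),
        if s + t = (i : ℕ) then
          ((j : ℕ).choose s : ℂ) * ((n - (j : ℕ)).choose t : ℂ) *
            (k⁻¹ 0 0) ^ s * (k⁻¹ 0 1) ^ ((j : ℕ) - s) *
            (k⁻¹ 1 0) ^ t * (k⁻¹ 1 1) ^ (n - (j : ℕ) - t)
        else 0

/-- `τ_n` on `U(2)`. -/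
def tau (n : ℕ) (k : U2) : MatN n := tauM n (k : Matrix (Fin 2) (Fin 2) ℂ)

/-- `K`-equivariance of an `End(V_n)`-valued function on `ℂ²`:
`F(kz) = τ_n(k) F(z) τ_n(k)⁻¹`. -/
def KEquivariant (n : ℕ) (F : C2 → MatN n) : Prop :=
  ∀ (k : U2) (z : C2), F (act (k : Matrix (Fin 2) (Fin 2) ℂ) z) = tau n k * F z * (tau n k)⁻¹

/-- For `|z| = 1`, the element `k_z ∈ SU(2)` with rows `(conj z₂, z₁)`, `(−conj z₁, z₂)`. -/
def kmat (z : C2) : Matrix (Fin 2) (Fin 2) ℂ :=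
  !![conj (z 1), z 0; -conj (z 0), z 1]

/-- `Q_B^d(z) = |z|^{2d} τ_n(k_{z/|z|}) B τ_n(k_{z/|z|})*` (for `z ≠ 0`). -/
def Q (n : ℕ) (B : MatN n) (d : ℕ) (z : C2) : MatN n :=
  (‖z‖ ^ (2 * d)) • (tauM n (kmat (‖z‖⁻¹ • z)) * B * (tauM n (kmat (‖z‖⁻¹ • z)))ᴴ)

open Classical in
/-- `Q_B^d` extended by (the value of its) continuity (extension, when it exists) at `0`. -/
def Qext (n : ℕ) (B : MatN n) (d : ℕ) (z : C2) : MatN n :=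
  if z = 0 then (if d = 0 then B else 0) else Q n B d z

/-- The basis element `X₁ = [[i,0],[0,−i]]` of `su(2)`. -/
def X1 : Matrix (Fin 2) (Fin 2) ℂ := !![Complex.I, 0; 0, -Complex.I]

/-- The basis element `X₂ = [[0,1],[−1,0]]` of `su(2)`. -/
def X2 : Matrix (Fin 2) (Fin 2) ℂ := !![0, 1; -1, 0]

/-- The basis element `X₃ = [[0,i],[i,0]]` of `su(2)`. -/
def X3 : Matrix (Fin 2) (Fin 2) ℂ := !![0, Complex.I; Complex.I, 0]

/-- `dτ_n(X) = (d/dt)|_{t=0} τ_n(exp(tX))`, computed entrywise. -/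
def dtau (n : ℕ) (X : Matrix (Fin 2) (Fin 2) ℂ) : MatN n :=
  Matrix.of fun i j =>
    deriv (fun t : ℝ => tauM n (NormedSpace.exp ((t : ℂ) • X)) i j) 0

/-- `B_n^1 = i·dτ_n(X₁) = diag(−n, −n+2, …, n)`. -/
def B1 (n : ℕ) : MatN n := Matrix.diagonal fun j => (-(n : ℂ) + 2 * (j : ℕ))

/-- `C̃(A) = −Σ_{i=1}^{3} [dτ_n(X_i), [dτ_n(X_i), A]]`. -/
def Ctilde (n : ℕ) (A : MatN n) : MatN n :=
  - ((dtau n X1 * (dtau n X1 * A - A * dtau n X1) - (dtau n X1 * A - A * dtau n X1) * dtau n X1)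
   + (dtau n X2 * (dtau n X2 * A - A * dtau n X2) - (dtau n X2 * A - A * dtau n X2) * dtau n X2)
   + (dtau n X3 * (dtau n X3 * A - A * dtau n X3) - (dtau n X3 * A - A * dtau n X3) * dtau n X3))

/-- Membership in `W_n^ℓ`, the eigenspace of `C̃` with eigenvalue `4ℓ(ℓ+1)`. -/
def Wmem (n ℓ : ℕ) (A : MatN n) : Prop :=
  Ctilde n A = (4 * (ℓ : ℂ) * ((ℓ : ℂ) + 1)) • A

/-- `q` is the monic polynomial `q_n^ℓ` of degree `ℓ` with `q(B_n^1) ∈ W_n^ℓ`. -/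
def IsQpoly (n ℓ : ℕ) (q : Polynomial ℂ) : Prop :=
  q.Monic ∧ q.natDegree = ℓ ∧ Wmem n ℓ (Polynomial.aeval (B1 n) q)

/-- A matrix-valued map each of whose entries is a polynomial in `z₁, z₂, conj z₁, conj z₂`. -/
def IsPolyMap (n : ℕ) (F : C2 → MatN n) : Prop :=
  ∀ i j, ∃ P : MvPolynomial (Fin 4) ℂ,
    ∀ z : C2, F z i j = MvPolynomial.eval ![z 0, z 1, conj (z 0), conj (z 1)] P

/-- The Euclidean Laplacian of `ℝ⁴ ≅ ℂ²`, applied to a vector-valued function. -/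
def lapl {W : Type*} [NormedAddCommGroup W] [NormedSpace ℝ W] (f : C2 → W) (z : C2) : W :=
  ∑ i : Fin 2,
    (iteratedDeriv 2 (fun t : ℝ => f (z + t • EuclideanSpace.single i (1 : ℂ))) 0
      + iteratedDeriv 2 (fun t : ℝ => f (z + t • EuclideanSpace.single i Complex.I)) 0)

/-- `⟨z,ζ⟩ = Re(z₁ conj ζ₁ + z₂ conj ζ₂)`. -/
def pairing (z ζ : C2) : ℝ := (∑ i, z i * conj (ζ i)).re

/-- The (entrywise) Fourier transform `F̂(ζ) = ∫_{ℂ²} F(z) e^{-i⟨z,ζ⟩} dz`. -/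
def FT (n : ℕ) (F : C2 → MatN n) (ζ : C2) : MatN n :=
  Matrix.of fun i j =>
    ∫ z : C2, F z i j * Complex.exp (-Complex.I * (pairing z ζ : ℝ))

/-- The base point `b = (0,1) ∈ ℂ²`. -/
def bvec : C2 := EuclideanSpace.single 1 1

/-- The normalized surface measure of the unit sphere `S³ ⊂ ℂ²`. -/
def sigmaS : Measure (Metric.sphere (0 : C2) 1) :=
  ((volume : Measure C2).toSphere Set.univ)⁻¹ • (volume : Measure C2).toSphere

/-- The `End(V_n)`-valued spherical function
`Φ_{ξ,j}(z) = (n+1) ∫_{S³} e^{-i √ξ ⟨z,ζ⟩} Q_{E_jj}^n(ζ) dσ(ζ)` (entrywise integral). -/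
def Phi (n : ℕ) (ξ : ℝ) (j : Fin (n+1)) (z : C2) : MatN n :=
  Matrix.of fun a b =>
    (n + 1 : ℂ) * ∫ ζ : Metric.sphere (0 : C2) 1,
      Complex.exp (-Complex.I * ((Real.sqrt ξ * pairing z ζ : ℝ) : ℂ)) *
        Q n (Matrix.single j j 1) n (ζ : C2) a b ∂sigmaS

/-- Iterated Laplacian. -/
def laplIter {W : Type*} [NormedAddCommGroup W] [NormedSpace ℝ W] (q : ℕ) (f : C2 → W) :
    C2 → W := (fun g => lapl g)^[q] f

/-- The Schwartz norm `‖F‖_{(M)} = max_{0≤q≤M} ‖(1+|z|²)^M Δ^q F‖_{L²(ℂ²)}` for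
`End(V_n)`-valued functions (`End(V_n)` carrying the Hilbert–Schmidt norm). -/
def FNorm (n M : ℕ) (F : C2 → MatN n) : ℝ :=
  (Finset.range (M + 1)).sup' Finset.nonempty_range_add_one fun q =>
    Real.sqrt (∫ z : C2, (1 + ‖z‖ ^ 2) ^ (2 * M) * ‖laplIter q F z‖ ^ 2)

/-- The Laplacian on `ℝ²`. -/
def laplR2 (g : ℝ × ℝ → ℂ) (x : ℝ × ℝ) : ℂ :=
  iteratedDeriv 2 (fun t : ℝ => g (x.1 + t, x.2)) 0
    + iteratedDeriv 2 (fun t : ℝ => g (x.1, x.2 + t)) 0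

/-- The Schwartz norm `‖g‖_{(M)}` on `S(ℝ²)`. -/
def gNorm2 (M : ℕ) (g : ℝ × ℝ → ℂ) : ℝ :=
  (Finset.range (M + 1)).sup' Finset.nonempty_range_add_one fun q =>
    Real.sqrt (∫ x : ℝ × ℝ, (1 + x.1 ^ 2 + x.2 ^ 2) ^ (2 * M) * ‖(laplR2)^[q] g x‖ ^ 2)

/-- The Schwartz norm `‖g‖_{(M)}` on `S(ℝ)` (the Laplacian on `ℝ` being `(d/dx)²`). -/
def gNorm1 (M : ℕ) (g : ℝ → ℂ) : ℝ :=
  (Finset.range (M + 1)).sup' Finset.nonempty_range_add_one fun q =>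
    Real.sqrt (∫ x : ℝ, (1 + x ^ 2) ^ (2 * M) * ‖iteratedDeriv (2 * q) g x‖ ^ 2)

/-!
The solution is `a = L c`, where the `q`-th row of `L = V⁻¹` holds the coefficients of `X^q` in
the Lagrange basis polynomials `ℓ_j = ∏_{m ≠ j} (X - t_m) / (t_j - t_m)`. By Vieta, the
coefficient of `X^q` in `∏_{m ≠ j} (X - t_m)` is a sum of `C(n, q)` products of `n - q` nodes,
so it suffices that every product of nodes `|t_m| = |2m - n|` is at most
`∏_{m ≠ j} |t_j - t_m| = 2ⁿ j! (n - j)!`. A product containing the node `0` vanishes;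
otherwise it is at most the product of all nonzero `|t_m|`. That is `(2ᵏ k!)²` for `n = 2k` and
`((2k+1)!!)² ≤ (2k+1) (2ᵏ k!)²` for `n = 2k + 1` (from `(2i+1)(2i+3) ≤ (2i+2)²`), and both are
at most `2ⁿ ⌊n/2⌋! ⌈n/2⌉! = 2ⁿ n! / C(n, ⌊n/2⌋) ≤ 2ⁿ j! (n - j)!`.
-/

open Finset Nat

section Field

variable {F : Type*} [Field F] {m : ℕ}

def lagrangeMatrix (v : Fin m → F) : Matrix (Fin m) (Fin m) F :=
  Matrix.of fun q j => (Lagrange.basis univ v j).coeff q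

theorem vandermonde_mul_lagrangeMatrix {v : Fin m → F} (hv : Function.Injective v) :
    vandermonde v * lagrangeMatrix v = 1 := by
  ext i j
  have hdeg : (Lagrange.basis univ v j).natDegree < m := by
    rw [Lagrange.natDegree_basis hv.injOn (mem_univ j), Finset.card_univ, Fintype.card_fin]
    exact Nat.sub_lt (Fin.pos j) one_pos
  calc (vandermonde v * lagrangeMatrix v) i j = (Lagrange.basis univ v j).eval (v i) := by
        rw [eval_eq_sum_range' hdeg, ← Fin.sum_univ_eq_sum_range]
        simp only [mul_apply, vandermonde_apply, lagrangeMatrix, of_apply, mul_comm]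
    _ = (1 : Matrix (Fin m) (Fin m) F) i j := by
        rcases eq_or_ne i j with rfl | hij
        · rw [Lagrange.eval_basis_self hv.injOn (mem_univ _), one_apply_eq]
        · rw [Lagrange.eval_basis_of_ne hij.symm (mem_univ _), one_apply_ne hij]

theorem sum_mul_pow_eq_iff {v : Fin m → F} (hv : Function.Injective v) (a c : Fin m → F) :
    (∀ j, ∑ q, a q * v j ^ (q : ℕ) = c j) ↔ a = lagrangeMatrix v *ᵥ c := by
  have hVL := vandermonde_mul_lagrangeMatrix hv
  have hLV := mul_eq_one_comm.1 hVL
  have hsystem : (∀ j, ∑ q, a q * v j ^ (q : ℕ) = c j) ↔ vandermonde v *ᵥ a = c := by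
    simp only [funext_iff, mulVec, dotProduct, vandermonde_apply, mul_comm]
  rw [hsystem]
  constructor
  · rintro rfl
    rw [mulVec_mulVec, hLV, one_mulVec]
  · rintro rfl
    rw [mulVec_mulVec, hVL, one_mulVec]

end Field

section NormedField

variable {𝕜 : Type*} [NormedField 𝕜] {ι : Type*}

theorem norm_coeff_nodal_le (s : Finset ι) (v : ι → 𝕜) (k : ℕ) {B : ℝ}
    (hB : ∀ t ⊆ s, ∏ i ∈ t, ‖v i‖ ≤ B) :
    ‖(Lagrange.nodal s v).coeff k‖ ≤ (#s).choose k * B := by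
  rcases le_or_gt k #s with hk | hk
  · have hnodal : Lagrange.nodal s v = ∏ i ∈ s, (X + C (-v i)) := by
      simp only [Lagrange.nodal, map_neg, sub_eq_add_neg]
    rw [hnodal, Finset.prod_X_add_C_coeff s _ hk]
    calc ‖∑ t ∈ s.powersetCard (#s - k), ∏ i ∈ t, -v i‖
        ≤ ∑ _t ∈ s.powersetCard (#s - k), B := by
          refine (norm_sum_le _ _).trans (sum_le_sum fun t ht => ?_)
          simpa only [norm_prod, norm_neg] using hB t (mem_powersetCard.1 ht).1
      _ = (#s).choose k * B := by
          rw [sum_const, card_powersetCard, choose_symm hk, nsmul_eq_mul]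
  · rw [coeff_eq_zero_of_natDegree_lt (by rwa [Lagrange.natDegree_nodal]), norm_zero,
      choose_eq_zero_of_lt hk, Nat.cast_zero, zero_mul]

theorem Lagrange.basis_eq_C_nodalWeight_mul_nodal [DecidableEq ι] (s : Finset ι) (v : ι → 𝕜)
    (i : ι) :
    Lagrange.basis s v i = C (Lagrange.nodalWeight s v i) * Lagrange.nodal (s.erase i) v := by
  simp_rw [Lagrange.basis, Lagrange.basisDivisor, Lagrange.nodalWeight, prod_mul_distrib, map_prod,
    Lagrange.nodal]

theorem norm_coeff_basis_le [DecidableEq ι] {s : Finset ι} {v : ι → 𝕜} {i : ι} (k : ℕ)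
    (hB : ∀ t ⊆ s.erase i, ∏ j ∈ t, ‖v j‖ ≤ ∏ j ∈ s.erase i, ‖v i - v j‖) :
    ‖(Lagrange.basis s v i).coeff k‖ ≤ (#(s.erase i)).choose k := by
  set D := ∏ j ∈ s.erase i, ‖v i - v j‖
  -- `hB ∅` says `1 ≤ D`, so in particular the nodes are distinct.
  have hD : 0 < D := one_pos.trans_le (by simpa using hB ∅ (empty_subset _))
  rw [Lagrange.basis_eq_C_nodalWeight_mul_nodal, coeff_C_mul, norm_mul, Lagrange.nodalWeight,
    norm_prod]
  simp_rw [norm_inv]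
  rw [prod_inv_distrib]
  calc D⁻¹ * ‖(Lagrange.nodal (s.erase i) v).coeff k‖
      ≤ D⁻¹ * ((#(s.erase i)).choose k * D) := by gcongr; exact norm_coeff_nodal_le _ _ _ hB
    _ = (#(s.erase i)).choose k := by field_simp

theorem norm_mulVec_apply_le {κ : Type*} [Fintype κ] [Nonempty κ] (A : Matrix ι κ 𝕜)
    (c : κ → 𝕜) (i : ι) {K : ℝ} (hA : ∀ j, ‖A i j‖ ≤ K) :
    ‖(A *ᵥ c) i‖ ≤ Fintype.card κ * K * univ.sup' univ_nonempty (fun j => ‖c j‖) := by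
  have hK : 0 ≤ K := (norm_nonneg _).trans (hA (Classical.arbitrary κ))
  calc ‖(A *ᵥ c) i‖ = ‖∑ j, A i j * c j‖ := rfl
    _ ≤ ∑ j, ‖A i j‖ * ‖c j‖ := by
        simpa only [norm_mul] using norm_sum_le univ fun j => A i j * c j
    _ ≤ ∑ _j : κ, K * univ.sup' univ_nonempty (fun j => ‖c j‖) :=
        sum_le_sum fun j _ => mul_le_mul (hA j) (le_sup' (fun j => ‖c j‖) (mem_univ j))
          (norm_nonneg _) hK
    _ = _ := by rw [sum_const, Finset.card_univ, nsmul_eq_mul, mul_assoc]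

end NormedField

theorem prod_erase_range_natAbs_sub {N j : ℕ} (hj : j ≤ N) :
    ∏ m ∈ (range (N + 1)).erase j, ((j : ℤ) - m).natAbs = j ! * (N - j)! := by
  have hsplit : (range (N + 1)).erase j = range j ∪ Ico (j + 1) (N + 1) := by
    ext m
    simp only [mem_erase, mem_range, mem_union, mem_Ico]
    omega
  have hdisj : Disjoint (range j) (Ico (j + 1) (N + 1)) := by
    simp only [disjoint_left, mem_range, mem_Ico]
    omega
  rw [hsplit, prod_union hdisj, prod_Ico_eq_prod_range, show N + 1 - (j + 1) = N - j by omega,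
    ← prod_range_add_one_eq_factorial, ← prod_range_add_one_eq_factorial,
    ← prod_range_reflect]
  congr 1 <;> refine prod_congr rfl fun m hm => ?_ <;> rw [mem_range] at hm <;> omega

theorem factorial_mul_factorial_div_two_le {n j : ℕ} (hj : j ≤ n) :
    (n / 2)! * (n - n / 2)! ≤ j ! * (n - j)! := by
  refine Nat.le_of_mul_le_mul_left ?_ (choose_pos (div_le_self n 2))
  rw [← mul_assoc, choose_mul_factorial_mul_factorial (div_le_self n 2),
    ← choose_mul_factorial_mul_factorial hj, mul_assoc]
  exact Nat.mul_le_mul_right _ (choose_le_middle j n)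

theorem sq_prod_range_odd_le (k : ℕ) :
    (∏ i ∈ range (k + 1), (2 * i + 1)) ^ 2 ≤ (2 * k + 1) * (2 ^ k * k !) ^ 2 := by
  induction k with
  | zero => simp
  | succ k ih =>
    rw [prod_range_succ, mul_pow, pow_succ, factorial_succ]
    calc _ ≤ (2 * k + 1) * (2 ^ k * k !) ^ 2 * (2 * (k + 1) + 1) ^ 2 :=
          Nat.mul_le_mul_right _ ih
      _ = ((2 * k + 1) * (2 * k + 3)) * (2 * (k + 1) + 1) * (2 ^ k * k !) ^ 2 := by ring
      _ ≤ (2 * k + 2) ^ 2 * (2 * (k + 1) + 1) * (2 ^ k * k !) ^ 2 := by gcongr; nlinarith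
      _ = _ := by ring

theorem prod_range_natAbs_two_mul_sub_odd (k : ℕ) :
    ∏ m ∈ range (2 * k + 1 + 1), ((2 * m : ℤ) - (2 * k + 1 : ℕ)).natAbs
      = (∏ i ∈ range (k + 1), (2 * i + 1)) ^ 2 := by
  rw [show 2 * k + 1 + 1 = (k + 1) + (k + 1) by omega, prod_range_add, sq, ← prod_range_reflect]
  congr 1 <;> refine prod_congr rfl fun m hm => ?_ <;> rw [mem_range] at hm <;> omega

theorem prod_filter_natAbs_two_mul_sub_le (n : ℕ) :
    ∏ m ∈ (range (n + 1)).filter (fun m => 2 * m ≠ n), ((2 * m : ℤ) - n).natAbs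
      ≤ 2 ^ n * ((n / 2)! * (n - n / 2)!) := by
  obtain ⟨k, rfl | rfl⟩ := n.even_or_odd'
  · have hS : (range (2 * k + 1)).filter (fun m => 2 * m ≠ 2 * k)
        = (range (2 * k + 1)).erase k := by
      ext m
      simp only [mem_filter, mem_erase, mem_range]
      omega
    have hfac : ∀ m ∈ (range (2 * k + 1)).erase k,
        ((2 * m : ℤ) - (2 * k : ℕ)).natAbs = 2 * ((k : ℤ) - m).natAbs := fun m _ => by omega
    rw [hS, prod_congr rfl hfac, prod_mul_distrib, prod_const,
      prod_erase_range_natAbs_sub (N := 2 * k) (by omega),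
      card_erase_of_mem (mem_range.2 (by omega)), card_range, Nat.add_sub_cancel,
      show 2 * k / 2 = k by omega, show 2 * k - k = k by omega]
  · rw [filter_true_of_mem (fun m _ => by omega), prod_range_natAbs_two_mul_sub_odd,
      show (2 * k + 1) / 2 = k by omega, show 2 * k + 1 - k = k + 1 by omega]
    calc _ ≤ (2 * k + 1) * (2 ^ k * k !) ^ 2 := sq_prod_range_odd_le k
      _ ≤ (2 * k + 2) * (2 ^ k * k !) ^ 2 := by gcongr; omega
      _ = 2 ^ (2 * k + 1) * (k ! * (k + 1)!) := by rw [factorial_succ]; ring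

theorem prod_natAbs_two_mul_sub_le {n j : ℕ} (hj : j ≤ n) {T : Finset ℕ}
    (hT : T ⊆ range (n + 1)) :
    ∏ m ∈ T, ((2 * m : ℤ) - n).natAbs ≤ 2 ^ n * (j ! * (n - j)!) := by
  by_cases hzero : ∃ m ∈ T, 2 * m = n
  · obtain ⟨m, hm, hmn⟩ := hzero
    rw [prod_eq_zero hm (by omega)]
    exact Nat.zero_le _
  push Not at hzero
  calc ∏ m ∈ T, ((2 * m : ℤ) - n).natAbs
      ≤ ∏ m ∈ (range (n + 1)).filter (fun m => 2 * m ≠ n), ((2 * m : ℤ) - n).natAbs :=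
        prod_le_prod_of_subset_of_one_le' (fun m hm => mem_filter.2 ⟨hT hm, hzero m hm⟩)
          fun m hm _ => by rw [mem_filter] at hm; omega
    _ ≤ 2 ^ n * ((n / 2)! * (n - n / 2)!) := prod_filter_natAbs_two_mul_sub_le n
    _ ≤ 2 ^ n * (j ! * (n - j)!) := Nat.mul_le_mul_left _ (factorial_mul_factorial_div_two_le hj)

theorem Fin.prod_univ_erase_eq_prod_range_erase {M : Type*} [CommMonoid M] {n : ℕ} (f : ℕ → M)
    (j : Fin n) : ∏ m ∈ univ.erase j, f m = ∏ m ∈ (range n).erase j, f m := by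
  rw [← Iio_eq_range, ← Fin.map_valEmbedding_univ, show (j : ℕ) = Fin.valEmbedding j from rfl,
    ← map_erase, prod_map]
  rfl

def equispacedNode (n m : ℕ) : ℂ := -(n : ℂ) + 2 * (m : ℂ)

theorem injective_equispacedNode (n : ℕ) :
    Function.Injective fun j : Fin (n + 1) => equispacedNode n j := by
  intro j j' h
  have : ((j : ℕ) : ℂ) = ((j' : ℕ) : ℂ) := by
    simp only [equispacedNode] at h
    linear_combination h / 2
  exact Fin.ext (Nat.cast_injective this)

theorem norm_equispacedNode (n m : ℕ) :
    ‖equispacedNode n m‖ = ((2 * m : ℤ) - n).natAbs := by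
  rw [equispacedNode,
    show -(n : ℂ) + 2 * m = (((2 * m : ℤ) - n : ℤ) : ℂ) by push_cast; ring,
    Complex.norm_intCast, Nat.cast_natAbs, Int.cast_abs]

theorem norm_equispacedNode_sub (n j m : ℕ) :
    ‖equispacedNode n j - equispacedNode n m‖ = 2 * ((j : ℤ) - m).natAbs := by
  rw [equispacedNode, equispacedNode,
    show -(n : ℂ) + 2 * j - (-n + 2 * m) = ((2 * ((j : ℤ) - m) : ℤ) : ℂ) by push_cast; ring,
    Complex.norm_intCast, Nat.cast_natAbs, Int.cast_abs]
  push_cast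
  rw [abs_mul, abs_two]

theorem prod_norm_equispacedNode_sub (n : ℕ) (j : Fin (n + 1)) :
    ∏ m ∈ univ.erase j, ‖equispacedNode n j - equispacedNode n m‖
      = 2 ^ n * (j ! * (n - j)! : ℕ) := by
  rw [Fin.prod_univ_erase_eq_prod_range_erase
    fun m => ‖equispacedNode n j - equispacedNode n m‖]
  simp_rw [norm_equispacedNode_sub]
  rw [prod_mul_distrib, prod_const, card_erase_of_mem (mem_range.2 j.isLt), card_range,
    Nat.add_sub_cancel, ← Nat.cast_prod, prod_erase_range_natAbs_sub j.is_le]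

theorem prod_norm_equispacedNode_le (n : ℕ) (j : Fin (n + 1)) (T : Finset (Fin (n + 1))) :
    ∏ m ∈ T, ‖equispacedNode n m‖
      ≤ ∏ m ∈ univ.erase j, ‖equispacedNode n j - equispacedNode n m‖ := by
  have hT : T.map Fin.valEmbedding ⊆ range (n + 1) := fun m hm => by
    obtain ⟨m', -, rfl⟩ := mem_map.1 hm
    exact mem_range.2 m'.isLt
  rw [prod_norm_equispacedNode_sub]
  calc ∏ m ∈ T, ‖equispacedNode n m‖
      = ∏ m ∈ T.map Fin.valEmbedding, ‖equispacedNode n m‖ :=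
        (prod_map T Fin.valEmbedding fun m => ‖equispacedNode n m‖).symm
    _ ≤ _ := by
        simp_rw [norm_equispacedNode]
        exact_mod_cast prod_natAbs_two_mul_sub_le j.is_le hT

theorem norm_coeff_basis_equispacedNode_le (n : ℕ) (j : Fin (n + 1)) (q : ℕ) :
    ‖(Lagrange.basis univ (fun j : Fin (n + 1) => equispacedNode n j) j).coeff q‖
      ≤ n.choose q := by
  simpa [card_erase_of_mem] using
    norm_coeff_basis_le q fun T _ => prod_norm_equispacedNode_le n j T

/-- The Vandermonde system with equispaced nodes `t_j = −n+2j` has a unique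
solution, whose entries satisfy `|a_q| ≤ (n+1)·C(n,q)·max_j |c_j|`. -/
theorem statement_14 (n : ℕ) (c : Fin (n+1) → ℂ) :
    ∃ a : Fin (n+1) → ℂ,
      (∀ j : Fin (n+1),
        ∑ q : Fin (n+1), a q * (-(n : ℂ) + 2 * ((j : ℕ) : ℂ)) ^ (q : ℕ) = c j) ∧
      (∀ a' : Fin (n+1) → ℂ,
        (∀ j : Fin (n+1),
          ∑ q : Fin (n+1), a' q * (-(n : ℂ) + 2 * ((j : ℕ) : ℂ)) ^ (q : ℕ) = c j) →
        a' = a) ∧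
      ∀ q : Fin (n+1), ‖a q‖ ≤ ((n : ℝ) + 1) * (n.choose (q : ℕ) : ℝ) *
        (Finset.univ.sup' Finset.univ_nonempty fun j : Fin (n+1) => ‖c j‖) := by
  have hsolve := sum_mul_pow_eq_iff (injective_equispacedNode n) (c := c)
  set L := lagrangeMatrix fun j : Fin (n + 1) => equispacedNode n j
  refine ⟨L *ᵥ c, (hsolve _).2 rfl, fun a' ha' => (hsolve a').1 ha', fun q => ?_⟩
  have hbound := norm_mulVec_apply_le L c q fun j => norm_coeff_basis_equispacedNode_le n j q
  rwa [Fintype.card_fin, Nat.cast_add_one] at hbound
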